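/- Let f = σ_L ∘ T_L ∘ σ_{L−1} ∘ ⋯ ∘ σ_1 ∘ T_1 be a feed-forward network, where each T_i : ℝ^{n_{i−1}} → ℝ^{n_i} is the linear map T_i(z) = W_i z for a matrix W_i, each σ_i : ℝ^{n_i} → ℝ^{n_i} is continuous, and cond(T_i) < ∞ and cond(σ_i) < ∞ for every i = 1, …, L. Then cond(f) ≤ (∏_{i=1}^L cond(σ_i)) · (∏_{i=1}^L cond(T_i)). -/

import Mathlib

open scoped ENNReal NNReal

/-- Relative error ratio `R(f,x;δ) = (‖f(x+δ)−f(x)‖/‖f(x)‖) / (‖δ‖/‖x‖)`,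
with values in `[0,∞]`. -/
noncomputable def relErrRatio {X Y : Type*} [NormedAddCommGroup X] [NormedAddCommGroup Y]
    (f : X → Y) (x δ : X) : ℝ≥0∞ :=
  ((‖f (x + δ) - f x‖₊ : ℝ≥0∞) / (‖f x‖₊ : ℝ≥0∞)) / ((‖δ‖₊ : ℝ≥0∞) / (‖x‖₊ : ℝ≥0∞))

/-- Local condition number `cond(f;x)`. -/
noncomputable def condAt {X Y : Type*} [NormedAddCommGroup X] [NormedAddCommGroup Y]
    (f : X → Y) (x : X) : ℝ≥0∞ :=
  ⨅ (ε : ℝ) (_ : 0 < ε), ⨆ (δ : X) (_ : δ ≠ 0) (_ : ‖δ‖ ≤ ε * ‖x‖), relErrRatio f x δ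

/-- Global condition number `cond(f)`. -/
noncomputable def condGlobal {X Y : Type*} [NormedAddCommGroup X] [NormedAddCommGroup Y]
    (f : X → Y) : ℝ≥0∞ :=
  ⨆ (x : X) (_ : x ≠ 0), condAt f x

/-- The composition `layer (L-1) ∘ ⋯ ∘ layer 0` of the first `L` layers of a feed-forward
network whose `i`-th layer maps `ℝ^{n i}` to `ℝ^{n (i+1)}`. -/
noncomputable def netComp (n : ℕ → ℕ)
    (layer : ∀ i : ℕ, EuclideanSpace ℝ (Fin (n i)) → EuclideanSpace ℝ (Fin (n (i + 1)))) :
    (L : ℕ) → EuclideanSpace ℝ (Fin (n 0)) → EuclideanSpace ℝ (Fin (n L))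
  | 0 => id
  | L + 1 => layer L ∘ netComp n layer L

/-!
Writing `Δ = f (x + δ) - f x`, the relative error ratio obeys the chain rule
`R(g ∘ f, x; δ) = R(g, f x; Δ) · R(f, x; δ)` whenever `f x ≠ 0` and `Δ ≠ 0`. Continuity of `f`
makes `Δ` small relative to `f x` once `δ` is small relative to `x`, so the local condition
numbers multiply: `cond(g ∘ f; x) ≤ cond(g; f x) · cond(f; x)`. If instead `f x = 0`, a finite
`cond(f; x)` forces `f` to vanish near `x`, and `cond(g ∘ f; x) = 0`. Taking suprema gives
`cond(g ∘ f) ≤ cond(g) · cond(f)`, and induction over the layers gives the bound for the network.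
-/

section Composition

variable {X Y Z : Type*} [NormedAddCommGroup X] [NormedAddCommGroup Y] [NormedAddCommGroup Z]

lemma condAt_le_condGlobal (f : X → Y) {x : X} (hx : x ≠ 0) : condAt f x ≤ condGlobal f :=
  le_iSup₂_of_le x hx le_rfl

lemma exists_forall_relErrRatio_le_of_condAt_lt {f : X → Y} {x : X} {a : ℝ≥0∞}
    (h : condAt f x < a) :
    ∃ ε > 0, ∀ δ : X, δ ≠ 0 → ‖δ‖ ≤ ε * ‖x‖ → relErrRatio f x δ ≤ a := by
  obtain ⟨ε, hε, hlt⟩ := by simpa only [condAt, iInf_lt_iff] using h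
  refine ⟨ε, hε, fun δ hδ hδx => le_trans ?_ hlt.le⟩
  exact le_iSup₂_of_le δ hδ (le_iSup_of_le hδx le_rfl)

lemma condAt_le_of_forall_relErrRatio_le {f : X → Y} {x : X} {a : ℝ≥0∞} {ε : ℝ} (hε : 0 < ε)
    (h : ∀ δ : X, δ ≠ 0 → ‖δ‖ ≤ ε * ‖x‖ → relErrRatio f x δ ≤ a) : condAt f x ≤ a :=
  iInf₂_le_of_le ε hε (iSup₂_le fun δ hδ => iSup_le (h δ hδ))

lemma relErrRatio_eq_zero_of_apply_eq {f : X → Y} {x δ : X} (h : f (x + δ) = f x) :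
    relErrRatio f x δ = 0 := by
  simp [relErrRatio, h]

lemma relErrRatio_eq_top_of_apply_eq_zero {f : X → Y} {x δ : X} (hx : x ≠ 0) (hfx : f x = 0)
    (hfxδ : f (x + δ) ≠ 0) : relErrRatio f x δ = ⊤ := by
  simp [relErrRatio, hfx, hfxδ, hx, ENNReal.div_eq_top]

lemma relErrRatio_comp {f : X → Y} (g : Y → Z) {x δ : X} (hfx : f x ≠ 0)
    (hΔ : f (x + δ) - f x ≠ 0) :
    relErrRatio (g ∘ f) x δ = relErrRatio g (f x) (f (x + δ) - f x) * relErrRatio f x δ := by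
  set v : ℝ≥0∞ := ‖f (x + δ) - f x‖₊ / ‖f x‖₊
  have hv0 : v ≠ 0 := (ENNReal.div_pos (by simpa using hΔ) ENNReal.coe_ne_top).ne'
  have hv : v ≠ ⊤ := ENNReal.div_ne_top ENNReal.coe_ne_top (by simpa using hfx)
  simp only [relErrRatio, Function.comp_apply, add_sub_cancel]
  rw [← mul_div_assoc, ENNReal.div_mul_cancel hv0 hv]

lemma exists_forall_apply_eq_zero_of_condAt_lt_top {f : X → Y} {x : X} (hx : x ≠ 0)
    (hfx : f x = 0) (hf : condAt f x < ⊤) :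
    ∃ ε > 0, ∀ δ : X, ‖δ‖ ≤ ε * ‖x‖ → f (x + δ) = 0 := by
  obtain ⟨a, hfa, ha⟩ := exists_between hf
  obtain ⟨ε, hε, hR⟩ := exists_forall_relErrRatio_le_of_condAt_lt hfa
  refine ⟨ε, hε, fun δ hδx => ?_⟩
  by_cases hδ : δ = 0
  · simpa [hδ] using hfx
  by_contra hfxδ
  have hRδ := hR δ hδ hδx
  rw [relErrRatio_eq_top_of_apply_eq_zero hx hfx hfxδ] at hRδ
  exact ha.ne (top_le_iff.mp hRδ)

lemma condAt_comp_eq_zero_of_apply_eq_zero {f : X → Y} (g : Y → Z) {x : X} (hx : x ≠ 0)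
    (hfx : f x = 0) (hf : condAt f x < ⊤) : condAt (g ∘ f) x = 0 := by
  obtain ⟨ε, hε, hzero⟩ := exists_forall_apply_eq_zero_of_condAt_lt_top hx hfx hf
  refine nonpos_iff_eq_zero.mp (condAt_le_of_forall_relErrRatio_le hε fun δ _ hδx => ?_)
  rw [relErrRatio_eq_zero_of_apply_eq (by simp [hzero δ hδx, hfx])]

lemma ContinuousAt.exists_forall_norm_sub_le {f : X → Y} {x : X} (hf : ContinuousAt f x)
    (hx : x ≠ 0) {η : ℝ} (hη : 0 < η) :
    ∃ ε > 0, ∀ δ : X, ‖δ‖ ≤ ε * ‖x‖ → ‖f (x + δ) - f x‖ ≤ η := by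
  obtain ⟨d, hd, hfd⟩ := Metric.continuousAt_iff.mp hf η hη
  have hx' : 0 < ‖x‖ := norm_pos_iff.mpr hx
  refine ⟨d / 2 / ‖x‖, by positivity, fun δ hδx => ?_⟩
  rw [div_mul_cancel₀ _ hx'.ne'] at hδx
  have hδd : dist (x + δ) x < d := by rw [dist_eq_norm, add_sub_cancel_left]; linarith
  simpa only [dist_eq_norm] using (hfd hδd).le

lemma condAt_comp_le {f : X → Y} (g : Y → Z) {x : X} (hf : ContinuousAt f x) (hx : x ≠ 0)
    (hfx : f x ≠ 0) (hF : condAt f x ≠ ⊤) (hG : condAt g (f x) ≠ ⊤) :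
    condAt (g ∘ f) x ≤ condAt g (f x) * condAt f x := by
  refine ENNReal.le_mul_of_forall_lt (.inr hF) (.inl hG) fun a ha b hb => ?_
  obtain ⟨εg, hεg, hRg⟩ := exists_forall_relErrRatio_le_of_condAt_lt ha
  obtain ⟨εf, hεf, hRf⟩ := exists_forall_relErrRatio_le_of_condAt_lt hb
  obtain ⟨εc, hεc, hΔ⟩ := hf.exists_forall_norm_sub_le hx (mul_pos hεg (norm_pos_iff.mpr hfx))
  refine condAt_le_of_forall_relErrRatio_le (lt_min hεf hεc) fun δ hδ hδx => ?_
  have hδf : ‖δ‖ ≤ εf * ‖x‖ := hδx.trans (by gcongr; exact min_le_left _ _)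
  have hδc : ‖δ‖ ≤ εc * ‖x‖ := hδx.trans (by gcongr; exact min_le_right _ _)
  by_cases hΔ0 : f (x + δ) - f x = 0
  · exact (relErrRatio_eq_zero_of_apply_eq (by simp [sub_eq_zero.mp hΔ0])).trans_le zero_le
  rw [relErrRatio_comp g hfx hΔ0]
  exact mul_le_mul' (hRg _ hΔ0 (hΔ δ hδc)) (hRf δ hδ hδf)

lemma condGlobal_comp_le {f : X → Y} (g : Y → Z) (hf : Continuous f)
    (hF : condGlobal f < ⊤) (hG : condGlobal g < ⊤) :
    condGlobal (g ∘ f) ≤ condGlobal g * condGlobal f := by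
  refine iSup₂_le fun x hx => ?_
  have hFx : condAt f x < ⊤ := (condAt_le_condGlobal f hx).trans_lt hF
  by_cases hfx : f x = 0
  · rw [condAt_comp_eq_zero_of_apply_eq_zero g hx hfx hFx]
    exact zero_le
  have hGx : condAt g (f x) < ⊤ := (condAt_le_condGlobal g hfx).trans_lt hG
  calc condAt (g ∘ f) x ≤ condAt g (f x) * condAt f x :=
        condAt_comp_le g hf.continuousAt hx hfx hFx.ne hGx.ne
    _ ≤ condGlobal g * condGlobal f :=
        mul_le_mul' (condAt_le_condGlobal g hfx) (condAt_le_condGlobal f hx)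

lemma condGlobal_id_le_one : condGlobal (id : X → X) ≤ 1 :=
  iSup₂_le fun _ _ => condAt_le_of_forall_relErrRatio_le one_pos fun _ _ _ => by
    simpa only [relErrRatio, id_eq, add_sub_cancel_left] using ENNReal.div_self_le_one

end Composition

section Network

variable (n : ℕ → ℕ)
  (layer : ∀ i : ℕ, EuclideanSpace ℝ (Fin (n i)) → EuclideanSpace ℝ (Fin (n (i + 1))))

lemma continuous_netComp :
    ∀ L : ℕ, (∀ i < L, Continuous (layer i)) → Continuous (netComp n layer L)
  | 0, _ => continuous_id
  | L + 1, h => (h L L.lt_succ_self).comp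
      (continuous_netComp L fun i hi => h i (hi.trans L.lt_succ_self))

lemma condGlobal_netComp_le :
    ∀ L : ℕ, (∀ i < L, Continuous (layer i)) → (∀ i < L, condGlobal (layer i) < ⊤) →
      condGlobal (netComp n layer L) ≤ ∏ i ∈ Finset.range L, condGlobal (layer i)
  | 0, _, _ => condGlobal_id_le_one
  | L + 1, hc, hfin => by
    have hcL : ∀ i < L, Continuous (layer i) := fun i hi => hc i (hi.trans L.lt_succ_self)
    have hfinL : ∀ i < L, condGlobal (layer i) < ⊤ :=
      fun i hi => hfin i (hi.trans L.lt_succ_self)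
    have ih := condGlobal_netComp_le L hcL hfinL
    have hprod : ∏ i ∈ Finset.range L, condGlobal (layer i) < ⊤ :=
      ENNReal.prod_lt_top fun i hi => hfinL i (Finset.mem_range.mp hi)
    calc condGlobal (layer L ∘ netComp n layer L)
        ≤ condGlobal (layer L) * condGlobal (netComp n layer L) :=
          condGlobal_comp_le _ (continuous_netComp n layer L hcL) (ih.trans_lt hprod)
            (hfin L L.lt_succ_self)
      _ ≤ condGlobal (layer L) * ∏ i ∈ Finset.range L, condGlobal (layer i) := by gcongr
      _ = ∏ i ∈ Finset.range (L + 1), condGlobal (layer i) := by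
          rw [Finset.prod_range_succ, mul_comm]

end Network

theorem condGlobal_network_le (L : ℕ) (n : ℕ → ℕ)
    (W : ∀ i : ℕ, Matrix (Fin (n (i + 1))) (Fin (n i)) ℝ)
    (σ : ∀ i : ℕ, EuclideanSpace ℝ (Fin (n (i + 1))) → EuclideanSpace ℝ (Fin (n (i + 1))))
    (T : ∀ i : ℕ, EuclideanSpace ℝ (Fin (n i)) → EuclideanSpace ℝ (Fin (n (i + 1))))
    (hT : ∀ i, T i = fun z => Matrix.toEuclideanLin (W i) z)
    (hσc : ∀ i < L, Continuous (σ i))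
    (hσ : ∀ i < L, condGlobal (σ i) < ⊤)
    (hTcond : ∀ i < L, condGlobal (T i) < ⊤)
    (f : EuclideanSpace ℝ (Fin (n 0)) → EuclideanSpace ℝ (Fin (n L)))
    (hf : f = netComp n (fun i => σ i ∘ T i) L) :
    condGlobal f ≤
      (∏ i ∈ Finset.range L, condGlobal (σ i)) * (∏ i ∈ Finset.range L, condGlobal (T i)) := by
  subst hf
  have hTc : ∀ i, Continuous (T i) := fun i => by
    rw [hT i]
    exact (Matrix.toEuclideanLin (W i)).continuous_of_finiteDimensional
  have hlayer : ∀ i < L, condGlobal (σ i ∘ T i) ≤ condGlobal (σ i) * condGlobal (T i) :=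
    fun i hi => condGlobal_comp_le _ (hTc i) (hTcond i hi) (hσ i hi)
  calc condGlobal (netComp n (fun i => σ i ∘ T i) L)
      ≤ ∏ i ∈ Finset.range L, condGlobal (σ i ∘ T i) :=
        condGlobal_netComp_le n _ L (fun i hi => (hσc i hi).comp (hTc i))
          fun i hi => (hlayer i hi).trans_lt (ENNReal.mul_lt_top (hσ i hi) (hTcond i hi))
    _ ≤ ∏ i ∈ Finset.range L, condGlobal (σ i) * condGlobal (T i) :=
        Finset.prod_le_prod' fun i hi => hlayer i (Finset.mem_range.mp hi)
    _ = _ := Finset.prod_mul_distrib
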